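/- arXiv:2402.04974 — 3 statements merged into one kernel-verified Lean document; each statement's English description precedes it below -/
import Mathlib

section
/- Fix k ≠ j and points z_k, z_j ∈ R^N, and let g_{k,j}(x) = (1+|x−z_j|)^{−a}(1+|x−z_k|)^{−b} where a ≥ 1 and b ≥ 1 are constants. Then for any constant 0 < δ ≤ min{a,b} there is a constant C > 0 (independent of z_k, z_j) such that g_{k,j}(x) ≤ C |z_k − z_j|^{−δ} ( (1+|x−z_j|)^{−(a+b−δ)} + (1+|x−z_k|)^{−(a+b−δ)} ) for all x ∈ R^N. -/
open MeasureTheory Real Filter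
open scoped BigOperators Topology ENNReal

noncomputable section

/-- `N`-dimensional Euclidean space. -/
abbrev Euc (N : ℕ) := EuclideanSpace ℝ (Fin N)

/-- The upper critical Hardy–Littlewood–Sobolev exponent `2*_α = (2N − α)/(N − 2)`. -/
def pexp (N : ℕ) (α : ℝ) : ℝ := (2 * (N : ℝ) - α) / ((N : ℝ) - 2)

/-- `τ = (N − 4)/(N − 2)`. -/
def tauN (N : ℕ) : ℝ := ((N : ℝ) - 4) / ((N : ℝ) - 2)

/-- The (coordinate) Laplacian `Δu(x) = Σ_i ∂²u/∂x_i²(x)`. -/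
def lapl {n : ℕ} (u : Euc n → ℝ) (x : Euc n) : ℝ :=
  ∑ i : Fin n, iteratedFDeriv ℝ 2 u x ![EuclideanSpace.single i 1, EuclideanSpace.single i 1]

/-- Riesz-potential convolution `(|x|^{-α} ∗ f)(x) = ∫ |x−y|^{-α} f(y) dy`. -/
def rieszConv (N : ℕ) (α : ℝ) (f : Euc N → ℝ) (x : Euc N) : ℝ :=
  ∫ y : Euc N, ‖x - y‖ ^ (-α) * f y

/-- The sharp Hardy–Littlewood–Sobolev constant `C(N, α)`. -/
def sharpHLS (N : ℕ) (α : ℝ) : ℝ :=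
  π ^ (α / 2) * (Real.Gamma ((N : ℝ) / 2 - α / 2) / Real.Gamma ((N : ℝ) - α / 2)) *
    (Real.Gamma ((N : ℝ) / 2) / Real.Gamma (N : ℝ)) ^ (-1 + α / (N : ℝ))

/-- Membership in `D^{1,2}(ℝ^N)`: `u ∈ L^{2N/(N−2)}` with gradient in `L²`. -/
def MemD12 (N : ℕ) (u : Euc N → ℝ) : Prop :=
  MemLp u (ENNReal.ofReal (2 * (N : ℝ) / ((N : ℝ) - 2))) volume ∧
    MemLp (fun x => ‖fderiv ℝ u x‖) 2 volume

/-- The best Sobolev constant `S`,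
`S = inf { ∫|∇u|² / (∫|u|^{2N/(N−2)})^{(N−2)/N} : u ∈ D^{1,2}, u ≠ 0 }`. -/
def sobolevS (N : ℕ) : ℝ :=
  sInf { c : ℝ | ∃ u : Euc N → ℝ, MemD12 N u ∧
    (∫ x : Euc N, |u x| ^ (2 * (N : ℝ) / ((N : ℝ) - 2))) ≠ 0 ∧
    c = (∫ x : Euc N, ‖fderiv ℝ u x‖ ^ 2) /
      (∫ x : Euc N, |u x| ^ (2 * (N : ℝ) / ((N : ℝ) - 2))) ^ (((N : ℝ) - 2) / (N : ℝ)) }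

/-- The normalizing constant in the bubble solutions. -/
def bubbleC (N : ℕ) (α : ℝ) : ℝ :=
  sobolevS N ^ (((N : ℝ) - α) * (2 - (N : ℝ)) / (4 * ((N : ℝ) - α + 2))) *
    sharpHLS N α ^ ((2 - (N : ℝ)) / (2 * ((N : ℝ) - α + 2))) *
    ((N : ℝ) * ((N : ℝ) - 2)) ^ (((N : ℝ) - 2) / 4)

/-- The bubble `U_{z,λ}`. -/
def Ub (N : ℕ) (α : ℝ) (z : Euc N) (lam : ℝ) (x : Euc N) : ℝ :=
  bubbleC N α * (lam / (1 + lam ^ 2 * ‖x - z‖ ^ 2)) ^ (((N : ℝ) - 2) / 2)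

/-- The "cylindrical coordinates" map `x = (x', x'') ↦ (|x'|, x'') ∈ ℝ × ℝ^{N−2} ≅ ℝ^{N−1}`. -/
def cyl (N : ℕ) (x : Euc N) : Euc (N - 1) :=
  (EuclideanSpace.equiv (Fin (N - 1)) ℝ).symm fun i =>
    if i.val = 0 then Real.sqrt (∑ k : Fin N, if k.val < 2 then (x k) ^ 2 else 0)
    else x ⟨i.val + 1, by have := i.isLt; omega⟩

/-- The point `(r, x'') ∈ ℝ × ℝ^{N−2} ≅ ℝ^{N−1}`. -/
def pairPt (N : ℕ) (r : ℝ) (x'' : Euc (N - 2)) : Euc (N - 1) :=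
  (EuclideanSpace.equiv (Fin (N - 1)) ℝ).symm fun i =>
    if h : i.val = 0 then r else x'' ⟨i.val - 1, by have := i.isLt; omega⟩

/-- Extension of a function of `(r, x'')` to a function on `ℝ^N`. -/
def Kext (N : ℕ) (K : Euc (N - 1) → ℝ) (x : Euc N) : ℝ := K (cyl N x)

/-- Surrogate for "the Brouwer degree `deg(f, a)` is nonzero": on some small closed ball
around `a`, the only zero of `f` is `a`, and `f` is essential on that ball, i.e. every
continuous map agreeing with `f` on the boundary sphere has a zero in the ball. -/
def DegreeNeZero {E : Type*} [NormedAddCommGroup E] [NormedSpace ℝ E] (f : E → E) (a : E) : Prop :=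
  ∃ ε > 0, (∀ x ∈ Metric.closedBall a ε, f x = 0 → x = a) ∧
    ∀ g : E → E, ContinuousOn g (Metric.closedBall a ε) →
      (∀ x ∈ Metric.sphere a ε, g x = f x) → ∃ x ∈ Metric.closedBall a ε, g x = 0

/-- Assumptions (K1) and (K2) on the potential `K = K(r, x'')`, viewed as a function on
`ℝ^{N−1} ≅ ℝ × ℝ^{N−2}`, with critical point `a₀ = (r₀, x₀'')`. -/
structure KAssumptions (N : ℕ) (hN : 5 ≤ N) (K : Euc (N - 1) → ℝ) (a₀ : Euc (N - 1)) : Prop where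
  bounded : ∃ C, ∀ a, |K a| ≤ C
  nonneg : ∀ a, 0 ≤ K a
  r0_pos : 0 < a₀ ⟨0, by omega⟩
  val_one : K a₀ = 1
  crit : gradient K a₀ = 0
  deg_ne : DegreeNeZero (gradient K) a₀
  smooth : ∃ ϑ > 0, ContDiffOn ℝ 3 K (Metric.ball a₀ ϑ)
  lap_neg : lapl K a₀ < 0

/-- The bubble centers `z_j = (r̄ cos(2πj/m), r̄ sin(2πj/m), x̄'')`, `j = 0, …, m−1`. -/
def zpt (N m : ℕ) (r : ℝ) (x'' : Euc (N - 2)) (j : Fin m) : Euc N :=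
  (EuclideanSpace.equiv (Fin N) ℝ).symm fun i =>
    if h0 : i.val = 0 then r * Real.cos (2 * π * (j.val : ℝ) / (m : ℝ))
    else if h1 : i.val = 1 then r * Real.sin (2 * π * (j.val : ℝ) / (m : ℝ))
    else x'' ⟨i.val - 2, by have := i.isLt; omega⟩

/-- The truncated bubble `Z_{z,λ} = ξ U_{z,λ}`. -/
def Zb (N : ℕ) (α : ℝ) (ξ : Euc N → ℝ) (z : Euc N) (lam : ℝ) (x : Euc N) : ℝ :=
  ξ x * Ub N α z lam x

/-- `Z_{r̄,x̄'',λ} = Σ_j ξ U_{z_j,λ}`. -/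
def Zsum (N m : ℕ) (α : ℝ) (ξ : Euc N → ℝ) (r : ℝ) (x'' : Euc (N - 2)) (lam : ℝ)
    (x : Euc N) : ℝ :=
  ∑ j : Fin m, Zb N α ξ (zpt N m r x'' j) lam x

/-- `Z*_{r̄,x̄'',λ} = Σ_j U_{z_j,λ}`. -/
def Zstar (N m : ℕ) (α : ℝ) (r : ℝ) (x'' : Euc (N - 2)) (lam : ℝ) (x : Euc N) : ℝ :=
  ∑ j : Fin m, Ub N α (zpt N m r x'' j) lam x

/-- The derivatives `Z_{j,l}`: `l = 0` is `∂/∂λ`, `l = 1` is `∂/∂r̄`, and `l = k ≥ 2` is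
`∂/∂x̄''_k`. -/
def Zd (N m : ℕ) (α : ℝ) (ξ : Euc N → ℝ) (r : ℝ) (x'' : Euc (N - 2)) (lam : ℝ)
    (j : Fin m) (l : Fin N) (x : Euc N) : ℝ :=
  if h0 : l.val = 0 then deriv (fun t => Zb N α ξ (zpt N m r x'' j) t x) lam
  else if h1 : l.val = 1 then deriv (fun t => Zb N α ξ (zpt N m t x'' j) lam x) r
  else deriv (fun t : ℝ => Zb N α ξ
    (zpt N m r (x'' + t • EuclideanSpace.single
      (⟨l.val - 2, by have := l.isLt; omega⟩ : Fin (N - 2)) (1 : ℝ)) j) lam x) (0 : ℝ)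

/-- The exponents `n_l`: `n₁ = −1`, `n_l = 1` for `l ≥ 2`. -/
def nexp {N : ℕ} (l : Fin N) : ℝ := if l.val = 0 then -1 else 1

/-- The weighted norm `‖·‖_*`. -/
def wnorm1 (N m : ℕ) (r : ℝ) (x'' : Euc (N - 2)) (lam : ℝ) (u : Euc N → ℝ) : ℝ :=
  ⨆ x : Euc N,
    (∑ j : Fin m, (1 + lam * ‖x - zpt N m r x'' j‖) ^ (-(((N : ℝ) - 2) / 2 + tauN N)))⁻¹ *
      (lam ^ (-(((N : ℝ) - 2) / 2)) * |u x|)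

/-- The weighted norm `‖·‖_{**}`. -/
def wnorm2 (N m : ℕ) (r : ℝ) (x'' : Euc (N - 2)) (lam : ℝ) (h : Euc N → ℝ) : ℝ :=
  ⨆ x : Euc N,
    (∑ j : Fin m, (1 + lam * ‖x - zpt N m r x'' j‖) ^ (-(((N : ℝ) + 2) / 2 + tauN N)))⁻¹ *
      (lam ^ (-(((N : ℝ) + 2) / 2)) * |h x|)

/-- Rotation by angle `θ` in the `(x₁, x₂)`-plane. -/
def rot2 (N : ℕ) (θ : ℝ) (x : Euc N) : Euc N :=
  if h : 2 ≤ N then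
    (EuclideanSpace.equiv (Fin N) ℝ).symm fun i =>
      if i.val = 0 then Real.cos θ * x ⟨0, by omega⟩ - Real.sin θ * x ⟨1, by omega⟩
      else if i.val = 1 then Real.sin θ * x ⟨0, by omega⟩ + Real.cos θ * x ⟨1, by omega⟩
      else x i
  else x

/-- Reflection `(x₁, x₂, x'') ↦ (x₁, −x₂, x'')`. -/
def refl2 (N : ℕ) (x : Euc N) : Euc N :=
  (EuclideanSpace.equiv (Fin N) ℝ).symm fun i => if i.val = 1 then -(x i) else x i

/-- The symmetric class `H`: `u ∈ D^{1,2}`, even in `x₂`, invariant under rotations by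
`2πj/m` in the `(x₁,x₂)`-plane. -/
def symH (N m : ℕ) (u : Euc N → ℝ) : Prop :=
  MemD12 N u ∧ (∀ x, u (refl2 N x) = u x) ∧
    ∀ (j : ℕ) (x : Euc N), u (rot2 N (2 * π * (j : ℝ) / (m : ℝ)) x) = u x

/-- The basis functions
`(2*_α−1)(|x|^{−α}∗|Z_j|^{2*_α})Z_j^{2*_α−2}Z_{j,l} + 2*_α(|x|^{−α}∗(Z_j^{2*_α−1}Z_{j,l}))Z_j^{2*_α−1}`. -/
def Bas (N m : ℕ) (α : ℝ) (ξ : Euc N → ℝ) (r : ℝ) (x'' : Euc (N - 2)) (lam : ℝ)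
    (j : Fin m) (l : Fin N) (x : Euc N) : ℝ :=
  (pexp N α - 1) *
      rieszConv N α (fun y => |Zb N α ξ (zpt N m r x'' j) lam y| ^ pexp N α) x *
      Zb N α ξ (zpt N m r x'' j) lam x ^ (pexp N α - 2) * Zd N m α ξ r x'' lam j l x
  + pexp N α *
      rieszConv N α
        (fun y => Zb N α ξ (zpt N m r x'' j) lam y ^ (pexp N α - 1) * Zd N m α ξ r x'' lam j l y) x *
      Zb N α ξ (zpt N m r x'' j) lam x ^ (pexp N α - 1)

/-- The `N` orthogonality conditions. -/
def orthCond (N m : ℕ) (α : ℝ) (ξ : Euc N → ℝ) (r : ℝ) (x'' : Euc (N - 2)) (lam : ℝ)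
    (φ : Euc N → ℝ) : Prop :=
  ∀ l : Fin N, ∫ x : Euc N, (∑ j : Fin m, Bas N m α ξ r x'' lam j l x) * φ x = 0

/-- The linear projected problem. -/
def LinProb (N m : ℕ) (α : ℝ) (Kx ξ : Euc N → ℝ) (r : ℝ) (x'' : Euc (N - 2)) (lam : ℝ)
    (h φ : Euc N → ℝ) (c : Fin N → ℝ) : Prop :=
  (∀ x, - lapl φ x
      - (pexp N α - 1) * Kx x *
          rieszConv N α (fun y => Kx y * |Zsum N m α ξ r x'' lam y| ^ pexp N α) x *
          Zsum N m α ξ r x'' lam x ^ (pexp N α - 2) * φ x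
      - pexp N α * Kx x *
          rieszConv N α (fun y => Kx y * Zsum N m α ξ r x'' lam y ^ (pexp N α - 1) * φ y) x *
          Zsum N m α ξ r x'' lam x ^ (pexp N α - 1)
      = h x + ∑ l : Fin N, c l * ∑ j : Fin m, Bas N m α ξ r x'' lam j l x)
  ∧ symH N m φ ∧ orthCond N m α ξ r x'' lam φ

/-- The nonlinear projected problem. -/
def NonlinProb (N m : ℕ) (α : ℝ) (Kx ξ : Euc N → ℝ) (r : ℝ) (x'' : Euc (N - 2)) (lam : ℝ)
    (φ : Euc N → ℝ) (c : Fin N → ℝ) : Prop :=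
  (∀ x, - lapl (fun y => Zsum N m α ξ r x'' lam y + φ y) x
      - Kx x *
          rieszConv N α (fun y => Kx y * |Zsum N m α ξ r x'' lam y + φ y| ^ pexp N α) x *
          (Zsum N m α ξ r x'' lam x + φ x) ^ (pexp N α - 1)
      = ∑ l : Fin N, c l * ∑ j : Fin m, Bas N m α ξ r x'' lam j l x)
  ∧ symH N m φ ∧ orthCond N m α ξ r x'' lam φ

/-- The quadratic remainder `N(φ)`. -/
def Nquad (N m : ℕ) (α : ℝ) (Kx ξ : Euc N → ℝ) (r : ℝ) (x'' : Euc (N - 2)) (lam : ℝ)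
    (φ : Euc N → ℝ) (x : Euc N) : ℝ :=
  Kx x * rieszConv N α (fun y => Kx y * |Zsum N m α ξ r x'' lam y + φ y| ^ pexp N α) x *
      (Zsum N m α ξ r x'' lam x + φ x) ^ (pexp N α - 1)
  - Kx x * rieszConv N α (fun y => Kx y * |Zsum N m α ξ r x'' lam y| ^ pexp N α) x *
      Zsum N m α ξ r x'' lam x ^ (pexp N α - 1)
  - pexp N α * Kx x *
      rieszConv N α (fun y => Kx y * Zsum N m α ξ r x'' lam y ^ (pexp N α - 1) * φ y) x *
      Zsum N m α ξ r x'' lam x ^ (pexp N α - 1)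
  - (pexp N α - 1) * Kx x *
      rieszConv N α (fun y => Kx y * |Zsum N m α ξ r x'' lam y| ^ pexp N α) x *
      Zsum N m α ξ r x'' lam x ^ (pexp N α - 2) * φ x

/-- The error term `l_m`. -/
def lmErr (N m : ℕ) (α : ℝ) (Kx ξ : Euc N → ℝ) (r : ℝ) (x'' : Euc (N - 2)) (lam : ℝ)
    (x : Euc N) : ℝ :=
  Kx x * rieszConv N α (fun y => Kx y * |Zsum N m α ξ r x'' lam y| ^ pexp N α) x *
      Zsum N m α ξ r x'' lam x ^ (pexp N α - 1)
  - ∑ j : Fin m, ξ x * rieszConv N α (fun y => |Ub N α (zpt N m r x'' j) lam y| ^ pexp N α) x *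
      Ub N α (zpt N m r x'' j) lam x ^ (pexp N α - 1)
  + Zstar N m α r x'' lam x * lapl ξ x
  + 2 * (inner ℝ (gradient ξ x) (gradient (Zstar N m α r x'' lam) x) : ℝ)

/-- The energy functional `J`. -/
def energyJ (N : ℕ) (α : ℝ) (Kx : Euc N → ℝ) (u : Euc N → ℝ) : ℝ :=
  (1 / 2) * (∫ x : Euc N, ‖fderiv ℝ u x‖ ^ 2)
  - (1 / (2 * pexp N α)) * ∫ x : Euc N, ∫ y : Euc N,
      Kx x * Kx y * |u x| ^ pexp N α * |u y| ^ pexp N α * ‖x - y‖ ^ (-α)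

/-- `∂Z_{r̄,x̄'',λ}/∂λ`. -/
def dZdlam (N m : ℕ) (α : ℝ) (ξ : Euc N → ℝ) (r : ℝ) (x'' : Euc (N - 2)) (lam : ℝ)
    (y : Euc N) : ℝ :=
  deriv (fun t => Zsum N m α ξ r x'' t y) lam

/-- `∂Z*_{r̄,x̄'',λ}/∂λ`. -/
def dZstardlam (N m : ℕ) (α : ℝ) (r : ℝ) (x'' : Euc (N - 2)) (lam : ℝ) (y : Euc N) : ℝ :=
  deriv (fun t => Zstar N m α r x'' t y) lam

/-- `∂J(Z_{r̄,x̄'',λ})/∂λ`. -/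
def dJdlam (N m : ℕ) (α : ℝ) (Kx ξ : Euc N → ℝ) (r : ℝ) (x'' : Euc (N - 2)) (lam : ℝ) : ℝ :=
  deriv (fun t => energyJ N α Kx (Zsum N m α ξ r x'' t)) lam

/-- `∂J(Z*_{r̄,x̄'',λ})/∂λ`. -/
def dJdlamStar (N m : ℕ) (α : ℝ) (Kx : Euc N → ℝ) (r : ℝ) (x'' : Euc (N - 2)) (lam : ℝ) : ℝ :=
  deriv (fun t => energyJ N α Kx (Zstar N m α r x'' t)) lam

/-- The residual `−Δu − K(|x|^{−α} ∗ (K|u|^{2*_α})) u^{2*_α−1}`. -/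
def resid (N : ℕ) (α : ℝ) (Kx : Euc N → ℝ) (u : Euc N → ℝ) (x : Euc N) : ℝ :=
  - lapl u x - Kx x * rieszConv N α (fun y => Kx y * |u y| ^ pexp N α) x * u x ^ (pexp N α - 1)

/-- The standing assumptions of the multi-bubble construction (fixed data). -/
structure GHyp (N : ℕ) (α : ℝ) (K : Euc (N - 1) → ℝ) (a₀ : Euc (N - 1))
    (L₀ L₁ δ θ : ℝ) (ξ : Euc N → ℝ) : Prop where
  hN : 5 ≤ N
  hα₁ : 5 - 6 / ((N : ℝ) - 2) < α
  hα₂ : α < (N : ℝ)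
  hK : KAssumptions N hN K a₀
  hL₀ : 0 < L₀
  hL : L₀ < L₁
  hδ : 0 < δ
  hKpos : ∀ a : Euc (N - 1), dist a a₀ ≤ 10 * δ → 0 < K a
  hθ : 0 < θ
  hθ' : θ < 1
  hξs : ContDiff ℝ (⊤ : ℕ∞) ξ
  hξ1 : ∀ x, dist (cyl N x) a₀ ≤ δ → ξ x = 1
  hξ0 : ∀ x, 2 * δ ≤ dist (cyl N x) a₀ → ξ x = 0
  hξrange : ∀ x, ξ x ∈ Set.Icc (0 : ℝ) 1
  hξsym : ∃ ξ₀ : Euc (N - 1) → ℝ, ∀ x, ξ x = ξ₀ (cyl N x)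

/-- The standing assumptions on the parameters `(m, r̄, x̄'', λ)` of the multi-bubble
configuration. -/
structure MBHyp (N : ℕ) (α : ℝ) (K : Euc (N - 1) → ℝ) (a₀ : Euc (N - 1))
    (L₀ L₁ δ θ : ℝ) (ξ : Euc N → ℝ) (m : ℕ) (r : ℝ) (x'' : Euc (N - 2)) (lam : ℝ) : Prop where
  hm : 0 < m
  hlam : lam ∈ Set.Icc (L₀ * (m : ℝ) ^ (((N : ℝ) - 2) / ((N : ℝ) - 4)))
      (L₁ * (m : ℝ) ^ (((N : ℝ) - 2) / ((N : ℝ) - 4)))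
  hloc : dist (pairPt N r x'') a₀ ≤ lam ^ (-(1 - θ))

end
/-- **Lemma B.1.** For `a, b ≥ 1` and `0 < δ ≤ min{a,b}` there is `C > 0`
(independent of the points) such that for distinct `z_k, z_j ∈ ℝ^N` and all `x`,
`(1+|x−z_j|)^{−a}(1+|x−z_k|)^{−b} ≤ C|z_k−z_j|^{−δ}((1+|x−z_j|)^{−(a+b−δ)} + (1+|x−z_k|)^{−(a+b−δ)})`. -/
theorem statement16 (N : ℕ) (hN : 1 ≤ N) (a b : ℝ) (ha : 1 ≤ a) (hb : 1 ≤ b)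
    (δ : ℝ) (hδ0 : 0 < δ) (hδ : δ ≤ min a b) :
    ∃ C : ℝ, 0 < C ∧ ∀ zk zj : Euc N, zk ≠ zj → ∀ x : Euc N,
      (1 + ‖x - zj‖) ^ (-a) * (1 + ‖x - zk‖) ^ (-b) ≤
        C * ‖zk - zj‖ ^ (-δ) *
          ((1 + ‖x - zj‖) ^ (-(a + b - δ)) + (1 + ‖x - zk‖) ^ (-(a + b - δ))) := by
  have key : ∀ a b : ℝ, 1 ≤ a → 1 ≤ b → δ ≤ a → ∀ A B d : ℝ, 1 ≤ B → B ≤ A → 0 < d →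
      d ≤ 2 * A → A ^ (-a) * B ^ (-b) ≤ 2 ^ δ * d ^ (-δ) * B ^ (-(a + b - δ)) := by
    intro a b ha hb hδa A B d hB hAB hd hdA
    have hA : (1 : ℝ) ≤ A := le_trans hB hAB
    have hA0 : (0 : ℝ) < A := lt_of_lt_of_le one_pos hA
    have hB0 : (0 : ℝ) < B := lt_of_lt_of_le one_pos hB
    have hsplit : A ^ (-a) = A ^ (-δ) * A ^ (-(a - δ)) := by
      rw [← Real.rpow_add hA0]; ring_nf
    have h1 : A ^ (-(a - δ)) ≤ B ^ (-(a - δ)) := by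
      rw [Real.rpow_neg hA0.le, Real.rpow_neg hB0.le]
      exact inv_anti₀ (Real.rpow_pos_of_pos hB0 _)
        (Real.rpow_le_rpow hB0.le hAB (by linarith))
    have h2 : A ^ (-δ) ≤ 2 ^ δ * d ^ (-δ) := by
      have hd2 : d / 2 ≤ A := by linarith
      have : A ^ (-δ) ≤ (d / 2) ^ (-δ) := by
        rw [Real.rpow_neg hA0.le, Real.rpow_neg (by positivity)]
        exact inv_anti₀ (Real.rpow_pos_of_pos (by positivity) _)
          (Real.rpow_le_rpow (by positivity) hd2 hδ0.le)
      calc A ^ (-δ) ≤ (d / 2) ^ (-δ) := this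
        _ = 2 ^ δ * d ^ (-δ) := by
            rw [Real.div_rpow hd.le (by norm_num), Real.rpow_neg (by norm_num : (0:ℝ) ≤ 2)]
            field_simp
    calc A ^ (-a) * B ^ (-b) = A ^ (-δ) * (A ^ (-(a - δ)) * B ^ (-b)) := by
          rw [hsplit]; ring
      _ ≤ (2 ^ δ * d ^ (-δ)) * (B ^ (-(a - δ)) * B ^ (-b)) := by
          apply mul_le_mul h2 (mul_le_mul_of_nonneg_right h1 (by positivity))
            (by positivity) (by positivity)
      _ = 2 ^ δ * d ^ (-δ) * B ^ (-(a + b - δ)) := by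
          rw [← Real.rpow_add hB0]; ring_nf
  refine ⟨2 ^ δ, by positivity, fun zk zj hne x => ?_⟩
  set A := 1 + ‖x - zj‖ with hAdef
  set B := 1 + ‖x - zk‖ with hBdef
  have hA1 : (1 : ℝ) ≤ A := le_add_of_nonneg_right (norm_nonneg _)
  have hB1 : (1 : ℝ) ≤ B := le_add_of_nonneg_right (norm_nonneg _)
  have hd : (0 : ℝ) < ‖zk - zj‖ := by
    simpa [sub_eq_zero] using norm_pos_iff.mpr (sub_ne_zero.mpr hne)
  have hdAB : ‖zk - zj‖ ≤ A + B - 2 := by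
    have := norm_sub_le_norm_sub_add_norm_sub zk x zj
    have h1 : ‖zk - x‖ = ‖x - zk‖ := norm_sub_rev _ _
    simp only [hAdef, hBdef]
    linarith [this, h1 ▸ this]
  rcases le_total A B with hAB | hAB
  · -- B is larger: use key with roles swapped
    have hk := key b a hb ha (le_trans hδ (min_le_right a b)) B A ‖zk - zj‖ hA1 hAB hd
      (by linarith)
    have : A ^ (-a) * B ^ (-b) ≤ 2 ^ δ * ‖zk - zj‖ ^ (-δ) * A ^ (-(a + b - δ)) := by
      calc A ^ (-a) * B ^ (-b) = B ^ (-b) * A ^ (-a) := by ring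
        _ ≤ 2 ^ δ * ‖zk - zj‖ ^ (-δ) * A ^ (-(b + a - δ)) := hk
        _ = 2 ^ δ * ‖zk - zj‖ ^ (-δ) * A ^ (-(a + b - δ)) := by ring_nf
    have hpos : (0 : ℝ) ≤ 2 ^ δ * ‖zk - zj‖ ^ (-δ) * B ^ (-(a + b - δ)) := by positivity
    linarith
  · have hk := key a b ha hb (le_trans hδ (min_le_left a b)) A B ‖zk - zj‖ hB1 hAB hd
      (by linarith)
    have hpos : (0 : ℝ) ≤ 2 ^ δ * ‖zk - zj‖ ^ (-δ) * A ^ (-(a + b - δ)) := by positivity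
    linarith
end

section
/- For any constant 0 < δ < N−2 with N ≥ 5 there is a constant C > 0 such that ∫_{R^N} |x−y|^{−(N−2)} (1+|y|)^{−(2+δ)} dy ≤ C (1+|x|)^{−δ} for all x ∈ R^N. -/
open MeasureTheory Real Filter
open scoped BigOperators Topology ENNReal

noncomputable section

section Statement17Aux
open MeasureTheory Real Set Metric
open scoped ENNReal

noncomputable section St17

local notation "dim" => Module.finrank ℝ

variable {E : Type*} [NormedAddCommGroup E] [NormedSpace ℝ E]
  [MeasurableSpace E] [BorelSpace E] [Nontrivial E] [FiniteDimensional ℝ E]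

lemma my_lintegral_fun_norm (μ : Measure E) [μ.IsAddHaarMeasure]
    (f : ℝ → ℝ≥0∞) (hf : Measurable f) :
    ∫⁻ x, f ‖x‖ ∂μ
      = μ.toSphere univ * ∫⁻ y in Ioi (0 : ℝ), ENNReal.ofReal (y ^ (dim E - 1)) * f y := by
  have h1 : ∫⁻ x, f ‖x‖ ∂μ = ∫⁻ x : ({0}ᶜ : Set E), f ‖x.1‖ ∂(μ.comap (↑)) := by
    rw [lintegral_subtype_comap (measurableSet_singleton (0:E)).compl
      (fun x => f ‖x‖), restrict_compl_singleton]
  have h2 : ∫⁻ x : ({0}ᶜ : Set E), f ‖x.1‖ ∂(μ.comap (↑))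
      = ∫⁻ p : sphere (0 : E) 1 × Ioi (0 : ℝ), f p.2
          ∂(μ.toSphere.prod (.volumeIoiPow (dim E - 1))) := by
    refine Eq.trans ?_ (μ.measurePreserving_homeomorphUnitSphereProd.lintegral_comp
      (hf.comp (measurable_subtype_coe.comp measurable_snd)))
    congr 1; funext x
    simp [homeomorphUnitSphereProd]
  have hm : Measurable fun p : sphere (0:E) 1 × Ioi (0:ℝ) => f p.2 :=
    hf.comp (measurable_subtype_coe.comp measurable_snd)
  have h3 : ∫⁻ p : sphere (0 : E) 1 × Ioi (0 : ℝ), f p.2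
        ∂(μ.toSphere.prod (.volumeIoiPow (dim E - 1)))
      = μ.toSphere univ * ∫⁻ r : Ioi (0:ℝ), f r ∂(Measure.volumeIoiPow (dim E - 1)) := by
    rw [MeasureTheory.lintegral_prod (μ := μ.toSphere)
      (ν := Measure.volumeIoiPow (dim E - 1)) _ hm.aemeasurable]
    simp [lintegral_const]
    ring
  have hd : Measurable fun r : Ioi (0:ℝ) => ENNReal.ofReal (r.1 ^ (dim E - 1)) :=
    (measurable_subtype_coe.pow_const _).ennreal_ofReal
  have h4 : ∫⁻ r : Ioi (0:ℝ), f r ∂(Measure.volumeIoiPow (dim E - 1))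
      = ∫⁻ y in Ioi (0 : ℝ), ENNReal.ofReal (y ^ (dim E - 1)) * f y := by
    have h5 := lintegral_withDensity_eq_lintegral_mul
      (Measure.comap (Subtype.val) (volume : Measure ℝ)) hd (hf.comp measurable_subtype_coe)
    rw [Measure.volumeIoiPow]
    refine h5.trans ?_
    rw [← lintegral_subtype_comap measurableSet_Ioi
        (fun y => ENNReal.ofReal (y ^ (dim E - 1)) * f y)]
    rfl
  rw [h1, h2, h3, h4]

def Svol (N : ℕ) : ℝ≥0∞ := (volume : Measure (Euc N)).toSphere univ

lemma Svol_ne_top (N : ℕ) : Svol N ≠ ∞ := measure_ne_top _ _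

lemma polar_Euc (N : ℕ) (hN : 0 < N) (f : ℝ → ℝ≥0∞) (hf : Measurable f) :
    ∫⁻ y : Euc N, f ‖y‖ =
      Svol N * ∫⁻ t in Ioi (0:ℝ), ENNReal.ofReal (t ^ (N - 1)) * f t := by
  haveI : Nontrivial (Euc N) := by
    apply Module.nontrivial_of_finrank_pos (R := ℝ)
    rw [finrank_euclideanSpace_fin]; exact hN
  have := my_lintegral_fun_norm (volume : Measure (Euc N)) f hf
  rwa [finrank_euclideanSpace_fin] at this

lemma radial_Euc (N : ℕ) (hN : 0 < N) (x : Euc N) (f : ℝ → ℝ≥0∞) (hf : Measurable f) :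
    ∫⁻ y : Euc N, f ‖y - x‖ =
      Svol N * ∫⁻ t in Ioi (0:ℝ), ENNReal.ofReal (t ^ (N - 1)) * f t := by
  rw [lintegral_sub_right_eq_self (fun z => f ‖z‖) x]
  exact polar_Euc N hN f hf

end St17

section St17b
open ENNReal in
lemma L1bound (N : ℕ) (hN : 5 ≤ N) (x : Euc N) (R : ℝ) (hR : 0 < R) :
    (∫⁻ y : Euc N in closedBall x R, ENNReal.ofReal (‖x - y‖ ^ (-((N:ℝ) - 2))))
      ≤ Svol N * (ENNReal.ofReal R * ENNReal.ofReal R) := by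
  set p : ℝ := -((N:ℝ) - 2) with hp
  set f₁ : ℝ → ℝ≥0∞ := fun t => (Iic R).indicator (fun t => ENNReal.ofReal (t ^ p)) t with hf₁
  have hf₁m : Measurable f₁ := by
    apply Measurable.indicator _ measurableSet_Iic
    fun_prop
  have key : (∫⁻ y : Euc N in closedBall x R, ENNReal.ofReal (‖x - y‖ ^ p))
      = ∫⁻ y : Euc N, f₁ ‖y - x‖ := by
    rw [← lintegral_indicator (measurableSet_closedBall)]
    refine lintegral_congr fun y => ?_
    by_cases hy : y ∈ closedBall x R
    · have hmem : ‖y - x‖ ∈ Iic R := by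
        rw [mem_Iic, ← dist_eq_norm]; exact mem_closedBall.mp hy
      simp only [hf₁, indicator_of_mem hy, norm_sub_rev]
      rw [indicator_of_mem (by rwa [norm_sub_rev y x] at hmem)]
    · have hmem : ‖y - x‖ ∉ Iic R := by
        rw [mem_Iic, ← dist_eq_norm]
        exact fun h => hy (mem_closedBall.mpr h)
      simp only [hf₁, indicator_of_notMem hy, indicator_of_notMem hmem]
  rw [key, radial_Euc N (by omega) x f₁ hf₁m]
  refine mul_le_mul_right ?_ _
  have e1 : ∀ t ∈ Ioi (0:ℝ), ENNReal.ofReal (t ^ (N - 1)) * f₁ t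
      = (Iic R).indicator (fun t => ENNReal.ofReal (t ^ (N-1)) * ENNReal.ofReal (t ^ p)) t := by
    intro t ht
    by_cases htR : t ∈ Iic R
    · rw [hf₁]; simp only [indicator_of_mem htR]
    · rw [hf₁]; simp only [indicator_of_notMem htR, mul_zero]
  rw [setLIntegral_congr_fun measurableSet_Ioi e1, lintegral_indicator
    measurableSet_Iic, Measure.restrict_restrict measurableSet_Iic, inter_comm,
    Ioi_inter_Iic]
  calc ∫⁻ t in Ioc 0 R, ENNReal.ofReal (t ^ (N-1)) * ENNReal.ofReal (t ^ p)
      ≤ ∫⁻ _t in Ioc 0 R, ENNReal.ofReal R := by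
        refine setLIntegral_mono measurable_const fun t ht => ?_
        rw [← ENNReal.ofReal_mul (pow_nonneg ht.1.le _)]
        apply ENNReal.ofReal_le_ofReal
        have ht0 : 0 < t := ht.1
        have : t ^ (N-1) * t ^ p = t := by
          rw [← Real.rpow_natCast t (N-1), ← Real.rpow_add ht0]
          have : ((N - 1 : ℕ) : ℝ) = (N : ℝ) - 1 := by
            rw [Nat.cast_sub (by omega)]; norm_num
          rw [this, hp]
          norm_num
        rw [this]; exact ht.2
      _ = ENNReal.ofReal R * ENNReal.ofReal R := by
        rw [setLIntegral_const, Real.volume_Ioc, sub_zero, mul_comm]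
end St17b

section St17c
lemma L2bound (N : ℕ) (hN : 5 ≤ N) (δ c : ℝ) (hδ0 : 0 < δ) (hδ : δ < (N:ℝ) - 2) (hc : 1 ≤ c) :
    (∫⁻ y : Euc N in closedBall (0 : Euc N) (2*c), ENNReal.ofReal ((1 + ‖y‖) ^ (-(2 + δ))))
      ≤ Svol N * ENNReal.ofReal ((1 + 2*c) ^ ((N:ℝ) - 2 - δ) / ((N:ℝ) - 2 - δ)) := by
  have hc0 : (0:ℝ) < 2*c := by linarith
  set q : ℝ := (N:ℝ) - 3 - δ with hq
  have hq1 : (-1 : ℝ) < q := by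
    have : (5:ℝ) ≤ (N:ℝ) := by exact_mod_cast hN
    simp only [hq]; linarith
  have hq2 : q + 1 = (N:ℝ) - 2 - δ := by simp only [hq]; ring
  set f₂ : ℝ → ℝ≥0∞ := fun t => (Iic (2*c)).indicator
    (fun t => ENNReal.ofReal ((1 + t) ^ (-(2 + δ)))) t with hf₂
  have hf₂m : Measurable f₂ := by
    apply Measurable.indicator _ measurableSet_Iic
    fun_prop
  have key : (∫⁻ y : Euc N in closedBall (0 : Euc N) (2*c),
        ENNReal.ofReal ((1 + ‖y‖) ^ (-(2 + δ))))
      = ∫⁻ y : Euc N, f₂ ‖y - 0‖ := by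
    rw [← lintegral_indicator (measurableSet_closedBall)]
    refine lintegral_congr fun y => ?_
    rw [sub_zero]
    by_cases hy : y ∈ closedBall (0 : Euc N) (2*c)
    · have hmem : ‖y‖ ∈ Iic (2*c) := mem_closedBall_zero_iff.mp hy
      simp only [hf₂, indicator_of_mem hy, indicator_of_mem hmem]
    · have hmem : ‖y‖ ∉ Iic (2*c) := fun h => hy (mem_closedBall_zero_iff.mpr h)
      simp only [hf₂, indicator_of_notMem hy, indicator_of_notMem hmem]
  rw [key, radial_Euc N (by omega) 0 f₂ hf₂m]
  refine mul_le_mul_right ?_ _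
  have e1 : ∀ t ∈ Ioi (0:ℝ), ENNReal.ofReal (t ^ (N - 1)) * f₂ t
      = (Iic (2*c)).indicator
          (fun t => ENNReal.ofReal (t ^ (N-1)) * ENNReal.ofReal ((1 + t) ^ (-(2 + δ)))) t := by
    intro t ht
    by_cases htR : t ∈ Iic (2*c)
    · simp only [hf₂, indicator_of_mem htR]
    · simp only [hf₂, indicator_of_notMem htR, mul_zero]
  rw [setLIntegral_congr_fun measurableSet_Ioi e1, lintegral_indicator
    measurableSet_Iic, Measure.restrict_restrict measurableSet_Iic, inter_comm,
    Ioi_inter_Iic]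
  have step2 : ∫⁻ t in Ioc 0 (2*c), ENNReal.ofReal (t ^ (N-1))
        * ENNReal.ofReal ((1 + t) ^ (-(2 + δ)))
      ≤ ∫⁻ t in Ioc 0 (2*c), ENNReal.ofReal ((1 + t) ^ q) := by
    refine setLIntegral_mono (by fun_prop) fun t ht => ?_
    rw [← ENNReal.ofReal_mul (pow_nonneg ht.1.le _)]
    apply ENNReal.ofReal_le_ofReal
    have ht0 : 0 < t := ht.1
    have h1t : (0:ℝ) < 1 + t := by linarith
    calc t ^ (N-1) * (1 + t) ^ (-(2 + δ))
        ≤ (1 + t) ^ ((N:ℝ)-1) * (1 + t) ^ (-(2 + δ)) := by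
          refine mul_le_mul_of_nonneg_right ?_ (Real.rpow_nonneg h1t.le _)
          rw [← Real.rpow_natCast t (N-1)]
          have hcast : ((N - 1 : ℕ) : ℝ) = (N : ℝ) - 1 := by
            rw [Nat.cast_sub (by omega)]; norm_num
          rw [hcast]
          exact Real.rpow_le_rpow ht0.le (by linarith) (by
            have : (5:ℝ) ≤ (N:ℝ) := by exact_mod_cast hN
            linarith)
        _ = (1 + t) ^ q := by
          rw [← Real.rpow_add h1t, hq]; ring_nf
  refine step2.trans ?_
  have hint : IntegrableOn (fun t => (1 + t) ^ q) (Ioc 0 (2*c)) := by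
    refine (ContinuousOn.integrableOn_compact isCompact_Icc ?_).mono_set Ioc_subset_Icc_self
    refine ContinuousOn.rpow_const (by fun_prop) fun t ht => Or.inl ?_
    have := ht.1; intro h; linarith [h ▸ this]
  rw [← MeasureTheory.ofReal_integral_eq_lintegral_ofReal hint
    ((ae_restrict_iff' measurableSet_Ioc).mpr (ae_of_all _ fun t ht =>
      Real.rpow_nonneg (by linarith [ht.1] : (0:ℝ) ≤ 1 + t) _))]
  apply ENNReal.ofReal_le_ofReal
  have hval : ∫ t in Ioc 0 (2*c), (1+t) ^ q = ((1+2*c) ^ (q+1) - 1)/(q+1) := by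
    rw [← intervalIntegral.integral_of_le (by linarith : (0:ℝ) ≤ 2*c)]
    have hcomp := intervalIntegral.integral_comp_add_left (a := (0:ℝ)) (b := 2*c)
      (fun u => u ^ q) 1
    rw [hcomp, add_zero, integral_rpow (Or.inl hq1), Real.one_rpow]
  rw [hval, hq2]
  have hpow : (0:ℝ) < (N:ℝ) - 2 - δ := by linarith
  have hnum : (1+2*c) ^ ((N:ℝ)-2-δ) - 1 ≤ (1+2*c) ^ ((N:ℝ)-2-δ) := by linarith
  exact div_le_div_of_nonneg_right hnum hpow.le
end St17c

section St17d
lemma L3bound (N : ℕ) (hN : 5 ≤ N) (δ c : ℝ) (hδ0 : 0 < δ) (hc : 1 ≤ c) :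
    (∫⁻ y : Euc N in (closedBall (0 : Euc N) (2*c))ᶜ,
        ENNReal.ofReal (‖y‖ ^ (-((N:ℝ) + δ))))
      ≤ Svol N * ENNReal.ofReal ((2*c) ^ (-δ) / δ) := by
  have hc0 : (0:ℝ) < 2*c := by linarith
  set f₃ : ℝ → ℝ≥0∞ := fun t => (Ioi (2*c)).indicator
    (fun t => ENNReal.ofReal (t ^ (-((N:ℝ) + δ)))) t with hf₃
  have hf₃m : Measurable f₃ := by
    apply Measurable.indicator _ measurableSet_Ioi
    fun_prop
  have key : (∫⁻ y : Euc N in (closedBall (0 : Euc N) (2*c))ᶜ,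
        ENNReal.ofReal (‖y‖ ^ (-((N:ℝ) + δ))))
      = ∫⁻ y : Euc N, f₃ ‖y - 0‖ := by
    rw [← lintegral_indicator (measurableSet_closedBall.compl)]
    refine lintegral_congr fun y => ?_
    rw [sub_zero]
    by_cases hy : y ∈ (closedBall (0 : Euc N) (2*c))ᶜ
    · have hmem : ‖y‖ ∈ Ioi (2*c) := by
        simp only [mem_compl_iff, mem_closedBall_zero_iff, not_le] at hy
        exact hy
      simp only [hf₃, indicator_of_mem hy, indicator_of_mem hmem]
    · have hmem : ‖y‖ ∉ Ioi (2*c) := by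
        simp only [mem_compl_iff, mem_closedBall_zero_iff, not_not] at hy
        simpa only [mem_Ioi, not_lt] using hy
      simp only [hf₃, indicator_of_notMem hy, indicator_of_notMem hmem]
  rw [key, radial_Euc N (by omega) 0 f₃ hf₃m]
  refine mul_le_mul_right ?_ _
  have e1 : ∀ t ∈ Ioi (0:ℝ), ENNReal.ofReal (t ^ (N - 1)) * f₃ t
      = (Ioi (2*c)).indicator (fun t => ENNReal.ofReal (t ^ (-(1 + δ)))) t := by
    intro t ht
    by_cases htR : t ∈ Ioi (2*c)
    · simp only [hf₃, indicator_of_mem htR]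
      rw [← ENNReal.ofReal_mul (pow_nonneg (le_of_lt ht) _)]
      congr 1
      rw [← Real.rpow_natCast t (N-1), ← Real.rpow_add ht]
      congr 1
      rw [Nat.cast_sub (by omega)]
      push_cast
      ring
    · simp only [hf₃, indicator_of_notMem htR, mul_zero]
  rw [setLIntegral_congr_fun measurableSet_Ioi e1, lintegral_indicator
    measurableSet_Ioi, Measure.restrict_restrict measurableSet_Ioi,
    inter_eq_left.mpr (Ioi_subset_Ioi (by linarith))]
  have hint : IntegrableOn (fun t : ℝ => t ^ (-(1 + δ))) (Ioi (2*c)) := by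
    have := integrableOn_Ioi_rpow_of_lt (a := -(1+δ)) (by linarith) hc0
    exact this
  rw [← MeasureTheory.ofReal_integral_eq_lintegral_ofReal hint
    ((ae_restrict_iff' measurableSet_Ioi).mpr (ae_of_all _ fun t ht =>
      Real.rpow_nonneg (by linarith [mem_Ioi.mp ht] : (0:ℝ) ≤ t) _))]
  apply ENNReal.ofReal_le_ofReal
  rw [integral_Ioi_rpow_of_lt (by linarith) hc0]
  have : -(1+δ) + 1 = -δ := by ring
  rw [this, neg_div, div_neg, neg_neg]
end St17d

section St17e
set_option maxHeartbeats 1000000 in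
lemma statement17aux (N : ℕ) (hN : 5 ≤ N) (δ : ℝ) (hδ0 : 0 < δ) (hδ : δ < (N : ℝ) - 2) :
    ∃ C : ℝ, 0 < C ∧ ∀ x : Euc N,
      (∫ y : Euc N, ‖x - y‖ ^ (-((N : ℝ) - 2)) * (1 + ‖y‖) ^ (-(2 + δ))) ≤
        C * (1 + ‖x‖) ^ (-δ) := by
  have hN5 : (5:ℝ) ≤ (N:ℝ) := by exact_mod_cast hN
  have hD : 0 < (N:ℝ) - 2 - δ := by linarith
  set p : ℝ := -((N:ℝ) - 2) with hp
  set SR : ℝ := (Svol N).toReal with hSR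
  have hSRnn : 0 ≤ SR := ENNReal.toReal_nonneg
  have hSofReal : Svol N = ENNReal.ofReal SR := (ENNReal.ofReal_toReal (Svol_ne_top N)).symm
  set K : ℝ := 2^δ + 2^((N:ℝ)-2) * 3^((N:ℝ)-2-δ) / ((N:ℝ)-2-δ) + 2^((N:ℝ)-2-δ)/δ with hK
  have hKnn : 0 ≤ K := by
    apply add_nonneg (add_nonneg (Real.rpow_nonneg (by norm_num) _) _)
      (div_nonneg (Real.rpow_nonneg (by norm_num) _) hδ0.le)
    exact div_nonneg (mul_nonneg (Real.rpow_nonneg (by norm_num) _)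
      (Real.rpow_nonneg (by norm_num) _)) hD.le
  refine ⟨SR * K + 1, by positivity, fun x => ?_⟩
  set c : ℝ := 1 + ‖x‖ with hc
  have hc1 : 1 ≤ c := by simp only [hc, le_add_iff_nonneg_right]; exact norm_nonneg x
  have hc0 : 0 < c := by linarith
  have hhalf : 0 < c/2 := by linarith
  set F : Euc N → ℝ := fun y => ‖x - y‖ ^ p * (1 + ‖y‖) ^ (-(2 + δ)) with hF
  have hFnn : ∀ y, 0 ≤ F y := fun y =>
    mul_nonneg (Real.rpow_nonneg (norm_nonneg _) _) (Real.rpow_nonneg (by positivity) _)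
  have hFmeas : AEStronglyMeasurable F volume := by
    apply Measurable.aestronglyMeasurable
    fun_prop
  have hgoal : (∫ y : Euc N, F y) ≤ (SR * K + 1) * c ^ (-δ) := by
    rw [integral_eq_lintegral_of_nonneg_ae (ae_of_all _ hFnn) hFmeas]
    apply ENNReal.toReal_le_of_le_ofReal (by positivity)
    set A : Set (Euc N) := closedBall x (c/2) with hA
    set B : Set (Euc N) := closedBall (0 : Euc N) (2*c) with hB
    set B1 : ℝ := (c/2)^(-(2+δ)) * ((c/2)*(c/2)) with hB1
    set B2 : ℝ := (c/2)^p * ((1+2*c)^((N:ℝ)-2-δ)/((N:ℝ)-2-δ)) with hB2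
    set B3 : ℝ := 2^((N:ℝ)-2) * ((2*c)^(-δ)/δ) with hB3
    have hB1nn : 0 ≤ B1 := by positivity
    have hB2nn : 0 ≤ B2 := by positivity
    have hB3nn : 0 ≤ B3 := by positivity
    have hT1 : ∫⁻ y in A, ENNReal.ofReal (F y) ≤ Svol N * ENNReal.ofReal B1 := by
      calc ∫⁻ y in A, ENNReal.ofReal (F y)
          ≤ ∫⁻ y in A, ENNReal.ofReal ((c/2)^(-(2+δ))) * ENNReal.ofReal (‖x - y‖ ^ p) := by
            refine setLIntegral_mono (by fun_prop) fun y hy => ?_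
            rw [hF, ENNReal.ofReal_mul (Real.rpow_nonneg (norm_nonneg _) _), mul_comm]
            refine mul_le_mul_left (ENNReal.ofReal_le_ofReal ?_) _
            refine Real.rpow_le_rpow_of_nonpos hhalf ?_ (by linarith)
            have h1 : ‖x - y‖ ≤ c/2 := by
              rw [← dist_eq_norm, dist_comm]; exact mem_closedBall.mp hy
            have h2 : ‖x‖ - ‖y‖ ≤ ‖x - y‖ := norm_sub_norm_le x y
            simp only [hc] at h1 h2 ⊢
            linarith
        _ = ENNReal.ofReal ((c/2)^(-(2+δ))) * ∫⁻ y in A, ENNReal.ofReal (‖x - y‖ ^ p) :=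
            lintegral_const_mul' _ _ ENNReal.ofReal_ne_top
        _ ≤ ENNReal.ofReal ((c/2)^(-(2+δ))) *
              (Svol N * (ENNReal.ofReal (c/2) * ENNReal.ofReal (c/2))) :=
            mul_le_mul_right (L1bound N hN x (c/2) hhalf) _
        _ = Svol N * ENNReal.ofReal B1 := by
            rw [hB1, ENNReal.ofReal_mul (by positivity), ENNReal.ofReal_mul hhalf.le]
            ring
    have hT2 : ∫⁻ y in Aᶜ ∩ B, ENNReal.ofReal (F y) ≤ Svol N * ENNReal.ofReal B2 := by
      calc ∫⁻ y in Aᶜ ∩ B, ENNReal.ofReal (F y)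
          ≤ ∫⁻ y in Aᶜ ∩ B, ENNReal.ofReal ((c/2)^p)
              * ENNReal.ofReal ((1 + ‖y‖) ^ (-(2 + δ))) := by
            refine setLIntegral_mono (by fun_prop) fun y hy => ?_
            rw [hF, ENNReal.ofReal_mul (Real.rpow_nonneg (norm_nonneg _) _)]
            refine mul_le_mul_left (ENNReal.ofReal_le_ofReal ?_) _
            refine Real.rpow_le_rpow_of_nonpos hhalf ?_ (by rw [hp]; linarith)
            have h1 : ¬ (dist y x ≤ c/2) := fun h => hy.1 (mem_closedBall.mpr h)
            rw [dist_comm, dist_eq_norm] at h1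
            linarith [not_le.mp h1]
        _ = ENNReal.ofReal ((c/2)^p)
              * ∫⁻ y in Aᶜ ∩ B, ENNReal.ofReal ((1 + ‖y‖) ^ (-(2 + δ))) :=
            lintegral_const_mul' _ _ ENNReal.ofReal_ne_top
        _ ≤ ENNReal.ofReal ((c/2)^p)
              * ∫⁻ y in B, ENNReal.ofReal ((1 + ‖y‖) ^ (-(2 + δ))) :=
            mul_le_mul_right (lintegral_mono_set inter_subset_right) _
        _ ≤ ENNReal.ofReal ((c/2)^p) * (Svol N *
              ENNReal.ofReal ((1 + 2*c) ^ ((N:ℝ) - 2 - δ) / ((N:ℝ) - 2 - δ))) :=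
            mul_le_mul_right (L2bound N hN δ c hδ0 hδ hc1) _
        _ = Svol N * ENNReal.ofReal B2 := by
            rw [hB2, ENNReal.ofReal_mul (by positivity)]
            ring
    have hT3 : ∫⁻ y in Aᶜ ∩ Bᶜ, ENNReal.ofReal (F y) ≤ Svol N * ENNReal.ofReal B3 := by
      calc ∫⁻ y in Aᶜ ∩ Bᶜ, ENNReal.ofReal (F y)
          ≤ ∫⁻ y in Aᶜ ∩ Bᶜ, ENNReal.ofReal (2^((N:ℝ)-2))
              * ENNReal.ofReal (‖y‖ ^ (-((N:ℝ) + δ))) := by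
            refine setLIntegral_mono (by fun_prop) fun y hy => ?_
            have hy2 : 2*c < ‖y‖ := by
              have := hy.2
              simp only [hB, mem_compl_iff, mem_closedBall_zero_iff, not_le] at this
              exact this
            have hy0 : 0 < ‖y‖ := by linarith
            have hstep1 : ‖x - y‖ ^ p ≤ (‖y‖/2) ^ p := by
              refine Real.rpow_le_rpow_of_nonpos (by linarith) ?_ (by rw [hp]; linarith)
              have h2 : ‖y‖ - ‖x‖ ≤ ‖y - x‖ := norm_sub_norm_le y x
              rw [norm_sub_rev y x] at h2
              have hxc : ‖x‖ = c - 1 := by rw [hc]; ring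
              linarith
            have hstep2 : (1 + ‖y‖) ^ (-(2 + δ)) ≤ ‖y‖ ^ (-(2+δ)) :=
              Real.rpow_le_rpow_of_nonpos hy0 (by linarith) (by linarith)
            have hstep3 : (‖y‖/2) ^ p * ‖y‖ ^ (-(2+δ))
                = 2^((N:ℝ)-2) * ‖y‖ ^ (-((N:ℝ) + δ)) := by
              rw [Real.div_rpow (norm_nonneg y) (by norm_num : (0:ℝ) ≤ 2),
                div_mul_eq_mul_div, ← Real.rpow_add hy0,
                show p + (-(2+δ)) = -((N:ℝ)+δ) by rw [hp]; ring,
                hp, Real.rpow_neg (by norm_num : (0:ℝ) ≤ 2), div_eq_mul_inv, inv_inv]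
              ring
            have hreal : F y ≤ 2^((N:ℝ)-2) * ‖y‖ ^ (-((N:ℝ) + δ)) := by
              rw [hF, ← hstep3]
              exact mul_le_mul hstep1 hstep2 (Real.rpow_nonneg (by positivity) _)
                (Real.rpow_nonneg (by positivity) _)
            refine le_trans (ENNReal.ofReal_le_ofReal hreal) (le_of_eq ?_)
            exact ENNReal.ofReal_mul (Real.rpow_nonneg (by norm_num) _)
        _ = ENNReal.ofReal (2^((N:ℝ)-2))
              * ∫⁻ y in Aᶜ ∩ Bᶜ, ENNReal.ofReal (‖y‖ ^ (-((N:ℝ) + δ))) :=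
            lintegral_const_mul' _ _ ENNReal.ofReal_ne_top
        _ ≤ ENNReal.ofReal (2^((N:ℝ)-2))
              * ∫⁻ y in Bᶜ, ENNReal.ofReal (‖y‖ ^ (-((N:ℝ) + δ))) :=
            mul_le_mul_right (lintegral_mono_set inter_subset_right) _
        _ ≤ ENNReal.ofReal (2^((N:ℝ)-2)) * (Svol N * ENNReal.ofReal ((2*c) ^ (-δ) / δ)) :=
            mul_le_mul_right (L3bound N hN δ c hδ0 hc1) _
        _ = Svol N * ENNReal.ofReal B3 := by
            rw [hB3, ENNReal.ofReal_mul (Real.rpow_nonneg (by norm_num) _)]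
            ring
    have hsplit : ∫⁻ y, ENNReal.ofReal (F y)
        ≤ (∫⁻ y in A, ENNReal.ofReal (F y)) + ((∫⁻ y in Aᶜ ∩ B, ENNReal.ofReal (F y))
            + (∫⁻ y in Aᶜ ∩ Bᶜ, ENNReal.ofReal (F y))) := by
      calc ∫⁻ y, ENNReal.ofReal (F y) = ∫⁻ y in A ∪ Aᶜ, ENNReal.ofReal (F y) := by
            rw [union_compl_self, Measure.restrict_univ]
        _ ≤ (∫⁻ y in A, ENNReal.ofReal (F y)) + ∫⁻ y in Aᶜ, ENNReal.ofReal (F y) :=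
            lintegral_union_le _ _ _
        _ ≤ _ := by
            refine add_le_add_right ?_ _
            calc ∫⁻ y in Aᶜ, ENNReal.ofReal (F y)
                = ∫⁻ y in (Aᶜ ∩ B) ∪ (Aᶜ ∩ Bᶜ), ENNReal.ofReal (F y) := by
                  rw [inter_union_compl]
              _ ≤ _ := lintegral_union_le _ _ _
    have hsum : B1 + B2 + B3 ≤ K * c^(-δ) := by
      have e1 : B1 = 2^δ * c^(-δ) := by
        have h2r : (c/2)*(c/2) = (c/2)^(2:ℝ) := by
          rw [show (2:ℝ) = ((2:ℕ):ℝ) by norm_num, Real.rpow_natCast]; ring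
        rw [hB1, h2r, ← Real.rpow_add hhalf, show -(2+δ)+2 = -δ by ring,
          Real.div_rpow hc0.le (by norm_num : (0:ℝ) ≤ 2),
          Real.rpow_neg (by norm_num : (0:ℝ) ≤ 2), div_eq_mul_inv, inv_inv]
        ring
      have e3 : B3 = 2^((N:ℝ)-2-δ)/δ * c^(-δ) := by
        have h23 : (2:ℝ)^((N:ℝ)-2) * 2^(-δ) = 2^((N:ℝ)-2-δ) := by
          rw [← Real.rpow_add (by norm_num : (0:ℝ) < 2)]; ring_nf
        rw [hB3, Real.mul_rpow (by norm_num : (0:ℝ) ≤ 2) hc0.le, ← h23]; ring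
      have e2 : B2 ≤ 2^((N:ℝ)-2)*3^((N:ℝ)-2-δ)/((N:ℝ)-2-δ) * c^(-δ) := by
        have h1 : (1+2*c)^((N:ℝ)-2-δ) ≤ (3*c)^((N:ℝ)-2-δ) :=
          Real.rpow_le_rpow (by linarith) (by linarith) hD.le
        have hcp : (c/2)^p = c^p * 2^((N:ℝ)-2) := by
          rw [Real.div_rpow hc0.le (by norm_num : (0:ℝ) ≤ 2)]
          have h2p : (2:ℝ)^p = (2^((N:ℝ)-2))⁻¹ := by
            rw [hp, Real.rpow_neg (by norm_num : (0:ℝ) ≤ 2)]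
          rw [h2p, div_eq_mul_inv, inv_inv]
        have h3c : (3*c)^((N:ℝ)-2-δ) = 3^((N:ℝ)-2-δ) * c^((N:ℝ)-2-δ) :=
          Real.mul_rpow (by norm_num) hc0.le
        have hcc : c^p * c^((N:ℝ)-2-δ) = c^(-δ) := by
          rw [← Real.rpow_add hc0, hp]; ring_nf
        calc B2 ≤ (c/2)^p * ((3*c)^((N:ℝ)-2-δ)/((N:ℝ)-2-δ)) := by
              rw [hB2]
              exact mul_le_mul_of_nonneg_left (div_le_div_of_nonneg_right h1 hD.le)
                (Real.rpow_nonneg hhalf.le _)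
          _ = 2^((N:ℝ)-2)*3^((N:ℝ)-2-δ)/((N:ℝ)-2-δ) * c^(-δ) := by
              rw [hcp, h3c, ← hcc]
              field_simp
      have hc3 : 0 ≤ c^(-δ) := Real.rpow_nonneg hc0.le _
      rw [hK, e1, e3]
      have := mul_le_mul_of_nonneg_left (le_refl (1:ℝ)) hc3
      nlinarith [e2]
    calc ∫⁻ y, ENNReal.ofReal (F y)
        ≤ (∫⁻ y in A, ENNReal.ofReal (F y)) + ((∫⁻ y in Aᶜ ∩ B, ENNReal.ofReal (F y))
            + (∫⁻ y in Aᶜ ∩ Bᶜ, ENNReal.ofReal (F y))) := hsplit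
      _ ≤ Svol N * ENNReal.ofReal B1 + (Svol N * ENNReal.ofReal B2
            + Svol N * ENNReal.ofReal B3) := add_le_add hT1 (add_le_add hT2 hT3)
      _ = ENNReal.ofReal (SR * (B1 + (B2 + B3))) := by
          rw [hSofReal, ENNReal.ofReal_mul hSRnn, ENNReal.ofReal_add hB1nn (add_nonneg hB2nn hB3nn),
            ENNReal.ofReal_add hB2nn hB3nn, mul_add, mul_add]
      _ ≤ ENNReal.ofReal ((SR * K + 1) * c^(-δ)) := by
          apply ENNReal.ofReal_le_ofReal
          have hc3 : 0 ≤ c^(-δ) := Real.rpow_nonneg hc0.le _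
          have h1 : SR * (B1 + (B2 + B3)) ≤ SR * (K * c^(-δ)) := by
            apply mul_le_mul_of_nonneg_left _ hSRnn
            linarith [hsum]
          nlinarith [h1]
  exact hgoal
end St17e

end Statement17Aux

end
/-- **Lemma B.2.** For `N ≥ 5` and `0 < δ < N − 2` there is `C > 0` such that
`∫ |x−y|^{−(N−2)} (1+|y|)^{−(2+δ)} dy ≤ C (1+|x|)^{−δ}` for all `x ∈ ℝ^N`. -/
theorem statement17 (N : ℕ) (hN : 5 ≤ N) (δ : ℝ) (hδ0 : 0 < δ) (hδ : δ < (N : ℝ) - 2) :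
    ∃ C : ℝ, 0 < C ∧ ∀ x : Euc N,
      (∫ y : Euc N, ‖x - y‖ ^ (-((N : ℝ) - 2)) * (1 + ‖y‖) ^ (-(2 + δ))) ≤
        C * (1 + ‖x‖) ^ (-δ) := by
  exact statement17aux N hN δ hδ0 hδ
end

section
/- Let N > 5, 0 < α < N, η > 0, λ > 0 and z_i ∈ R^N with λ|x−z_i|/2 > 1 wherever relevant. Then there is a constant C > 0 such that the convolution satisfies ( |·|^{−α} ∗ λ^{N−α/2} (1+λ|·−z_i|)^{−((3N+2)/2−α+η)} )(x) = ∫_{R^N} |y|^{−α} λ^{N−α/2} (1 + λ|x − z_i − y|)^{−((3N+2)/2−α+η)} dy ≤ C λ^{α/2} (1+λ|x−z_i|)^{−min{α, (N+2)/2}} for all x ∈ R^N. -/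
open MeasureTheory Real Filter
open scoped BigOperators Topology ENNReal

section AuxS18
open Metric Set

namespace S18

lemma pointP {u v a b : ℝ} (hu : 1 ≤ u) (hv : 1 ≤ v) (ha : 0 ≤ a) (hb : 0 ≤ b) :
    u ^ (-a) * v ^ (-b) ≤ u ^ (-(a + b)) + v ^ (-(a + b)) := by
  have hu0 : (0:ℝ) < u := lt_of_lt_of_le one_pos hu
  have hv0 : (0:ℝ) < v := lt_of_lt_of_le one_pos hv
  rcases le_total u v with h | h
  · calc u ^ (-a) * v ^ (-b) ≤ u ^ (-a) * u ^ (-b) :=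
          mul_le_mul_of_nonneg_left
            (Real.rpow_le_rpow_of_nonpos hu0 h (neg_nonpos.mpr hb)) (by positivity)
    _ = u ^ (-(a+b)) := by rw [← Real.rpow_add hu0]; ring_nf
    _ ≤ _ := le_add_of_nonneg_right (by positivity)
  · calc u ^ (-a) * v ^ (-b) ≤ v ^ (-a) * v ^ (-b) :=
          mul_le_mul_of_nonneg_right
            (Real.rpow_le_rpow_of_nonpos hv0 h (neg_nonpos.mpr ha)) (by positivity)
    _ = v ^ (-(a+b)) := by rw [← Real.rpow_add hv0]; ring_nf
    _ ≤ _ := le_add_of_nonneg_left (by positivity)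

lemma riesz_meas {N : ℕ} {α : ℝ} :
    Measurable (fun w : EuclideanSpace ℝ (Fin N) => ‖w‖ ^ (-α)) := by
  fun_prop

lemma integrableOn_riesz_unitBall {N : ℕ} (hN : 0 < N) {α : ℝ} (hα0 : 0 < α)
    (hαN : α < N) :
    IntegrableOn (fun w : EuclideanSpace ℝ (Fin N) => ‖w‖ ^ (-α))
      (ball 0 1) volume := by
  have hmeas : Measurable (fun w : EuclideanSpace ℝ (Fin N) => ‖w‖ ^ (-α)) := riesz_meas
  have hnn : ∀ w : EuclideanSpace ℝ (Fin N), 0 ≤ ‖w‖ ^ (-α) := fun w => by positivity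
  constructor
  · exact hmeas.aestronglyMeasurable
  · rw [hasFiniteIntegral_iff_ofReal (ae_of_all _ hnn)]
    set μ := volume.restrict (ball (0 : EuclideanSpace ℝ (Fin N)) 1) with hμ
    rw [lintegral_eq_lintegral_meas_le μ (ae_of_all _ hnn) hmeas.aemeasurable]
    have hsub : ∀ t : ℝ, 0 < t →
        {a : EuclideanSpace ℝ (Fin N) | t ≤ ‖a‖ ^ (-α)} ⊆ closedBall 0 (t ^ (-α⁻¹)) := by
      intro t ht a ha
      simp only [mem_setOf_eq] at ha
      simp only [mem_closedBall_zero_iff]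
      have h1 : (‖a‖ ^ (-α)) ^ (-α⁻¹) ≤ t ^ (-α⁻¹) :=
        Real.rpow_le_rpow_of_nonpos ht ha (neg_nonpos.mpr (inv_nonneg.mpr hα0.le))
      have h2 : (‖a‖ ^ (-α)) ^ (-α⁻¹) = ‖a‖ := by
        rw [← Real.rpow_mul (norm_nonneg a), neg_mul_neg, mul_inv_cancel₀ hα0.ne',
          Real.rpow_one]
      calc ‖a‖ = (‖a‖ ^ (-α)) ^ (-α⁻¹) := h2.symm
      _ ≤ t ^ (-α⁻¹) := h1
    calc ∫⁻ t in Ioi (0:ℝ), μ {a | t ≤ ‖a‖ ^ (-α)}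
        ≤ ∫⁻ t in Ioc (0:ℝ) 1 ∪ Ioi 1, μ {a | t ≤ ‖a‖ ^ (-α)} :=
          lintegral_mono_set Ioi_subset_Ioc_union_Ioi
      _ ≤ (∫⁻ t in Ioc (0:ℝ) 1, μ {a | t ≤ ‖a‖ ^ (-α)}) +
            ∫⁻ t in Ioi (1:ℝ), μ {a | t ≤ ‖a‖ ^ (-α)} := lintegral_union_le _ _ _
      _ < ∞ := by
          apply ENNReal.add_lt_top.2
          constructor
          · calc (∫⁻ t in Ioc (0:ℝ) 1, μ {a | t ≤ ‖a‖ ^ (-α)})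
                ≤ ∫⁻ _ in Ioc (0:ℝ) 1, volume (ball (0 : EuclideanSpace ℝ (Fin N)) 1) := by
                  apply setLIntegral_mono' measurableSet_Ioc
                  intro t _
                  calc μ {a | t ≤ ‖a‖ ^ (-α)} ≤ μ univ := measure_mono (subset_univ _)
                  _ = volume (ball (0 : EuclideanSpace ℝ (Fin N)) 1) := by
                      rw [hμ, Measure.restrict_apply_univ]
              _ < ∞ := by
                  rw [setLIntegral_const]
                  exact ENNReal.mul_lt_top measure_ball_lt_top (by simp)
          · have hc : -(α⁻¹ * N) < -1 := by
              rw [neg_lt_neg_iff, lt_inv_mul_iff₀ hα0]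
              simpa using hαN
            calc (∫⁻ t in Ioi (1:ℝ), μ {a | t ≤ ‖a‖ ^ (-α)})
                ≤ ∫⁻ t in Ioi (1:ℝ), ENNReal.ofReal (t ^ (-(α⁻¹ * N))) *
                    volume (ball (0 : EuclideanSpace ℝ (Fin N)) 1) := by
                  apply setLIntegral_mono' measurableSet_Ioi
                  intro t ht
                  have ht0 : (0:ℝ) < t := lt_trans one_pos ht
                  calc μ {a | t ≤ ‖a‖ ^ (-α)}
                      ≤ volume (closedBall (0 : EuclideanSpace ℝ (Fin N)) (t ^ (-α⁻¹))) := by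
                        rw [hμ]
                        exact le_trans (Measure.restrict_le_self _)
                          (measure_mono (hsub t ht0))
                  _ = ENNReal.ofReal ((t ^ (-α⁻¹)) ^ (Module.finrank ℝ (EuclideanSpace ℝ (Fin N)))) *
                        volume (ball (0 : EuclideanSpace ℝ (Fin N)) 1) :=
                      Measure.addHaar_closedBall _ _ (by positivity)
                  _ = ENNReal.ofReal (t ^ (-(α⁻¹ * N))) *
                        volume (ball (0 : EuclideanSpace ℝ (Fin N)) 1) := by
                      rw [finrank_euclideanSpace_fin, ← Real.rpow_natCast (t ^ (-α⁻¹)) N,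
                        ← Real.rpow_mul ht0.le]
                      ring_nf
              _ < ∞ := by
                  rw [lintegral_mul_const' _ _ measure_ball_lt_top.ne]
                  exact ENNReal.mul_lt_top
                    ((integrableOn_Ioi_rpow_of_lt hc one_pos).setLIntegral_lt_top)
                    measure_ball_lt_top

end S18

namespace S18b
open S18

lemma riesz_ball_scale {N : ℕ} (hN : 0 < N) {α : ℝ} (hα0 : 0 < α) (hαN : α < N)
    {ρ : ℝ} (hρ : 0 < ρ) :
    IntegrableOn (fun w : EuclideanSpace ℝ (Fin N) => ‖w‖ ^ (-α)) (ball 0 ρ) volume ∧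
    ∫ w in ball (0 : EuclideanSpace ℝ (Fin N)) ρ, ‖w‖ ^ (-α) =
      ρ ^ ((N : ℝ) - α) * ∫ w in ball (0 : EuclideanSpace ℝ (Fin N)) 1, ‖w‖ ^ (-α) := by
  set g : EuclideanSpace ℝ (Fin N) → ℝ :=
    (ball (0 : EuclideanSpace ℝ (Fin N)) 1).indicator (fun w => ‖w‖ ^ (-α)) with hg
  have hρinv : (0:ℝ) < ρ⁻¹ := by positivity
  have key : ∀ w : EuclideanSpace ℝ (Fin N), g (ρ⁻¹ • w) =
      ρ ^ α * (ball (0 : EuclideanSpace ℝ (Fin N)) ρ).indicator (fun w => ‖w‖ ^ (-α)) w := by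
    intro w
    have hnorm : ‖ρ⁻¹ • w‖ = ρ⁻¹ * ‖w‖ := by
      rw [norm_smul, Real.norm_eq_abs, abs_of_pos hρinv]
    have hval : ‖ρ⁻¹ • w‖ ^ (-α) = ρ ^ α * ‖w‖ ^ (-α) := by
      rw [hnorm, Real.mul_rpow hρinv.le (norm_nonneg w), ← Real.rpow_neg_one ρ,
        ← Real.rpow_mul hρ.le]
      ring_nf
    have hmem : ρ⁻¹ • w ∈ ball (0 : EuclideanSpace ℝ (Fin N)) 1 ↔
        w ∈ ball (0 : EuclideanSpace ℝ (Fin N)) ρ := by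
      simp only [mem_ball_zero_iff, hnorm]
      rw [inv_mul_lt_iff₀ hρ, mul_one]
    by_cases hw : w ∈ ball (0 : EuclideanSpace ℝ (Fin N)) ρ
    · rw [hg, indicator_of_mem (hmem.mpr hw), indicator_of_mem hw, hval]
    · rw [hg, indicator_of_notMem (fun h => hw (hmem.mp h)),
        indicator_of_notMem hw, mul_zero]
  have hgint : Integrable g volume :=
    (integrableOn_riesz_unitBall hN hα0 hαN).integrable_indicator measurableSet_ball
  have hcomp : Integrable (fun w : EuclideanSpace ℝ (Fin N) => g (ρ⁻¹ • w)) volume :=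
    (integrable_comp_smul_iff volume g (inv_ne_zero hρ.ne')).mpr hgint
  have hind : Integrable
      ((ball (0 : EuclideanSpace ℝ (Fin N)) ρ).indicator (fun w => ‖w‖ ^ (-α))) volume := by
    have : ((ball (0 : EuclideanSpace ℝ (Fin N)) ρ).indicator (fun w => ‖w‖ ^ (-α)))
        = fun w => (ρ ^ α)⁻¹ * g (ρ⁻¹ • w) := by
      funext w
      rw [key w, ← mul_assoc, inv_mul_cancel₀ (by positivity : (ρ:ℝ) ^ α ≠ 0), one_mul]
    rw [this]
    exact hcomp.const_mul _
  have hInt : IntegrableOn (fun w : EuclideanSpace ℝ (Fin N) => ‖w‖ ^ (-α)) (ball 0 ρ) volume :=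
    (integrable_indicator_iff measurableSet_ball).mp hind
  refine ⟨hInt, ?_⟩
  have hval : ∫ w : EuclideanSpace ℝ (Fin N), g (ρ⁻¹ • w) =
      (ρ ^ Module.finrank ℝ (EuclideanSpace ℝ (Fin N))) • ∫ w, g w :=
    Measure.integral_comp_inv_smul_of_nonneg volume g hρ.le
  have hval2 : ∫ w : EuclideanSpace ℝ (Fin N), g (ρ⁻¹ • w) =
      ρ ^ α * ∫ w in ball (0 : EuclideanSpace ℝ (Fin N)) ρ, ‖w‖ ^ (-α) := by
    rw [show (fun w : EuclideanSpace ℝ (Fin N) => g (ρ⁻¹ • w)) =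
        fun w => ρ ^ α * (ball (0 : EuclideanSpace ℝ (Fin N)) ρ).indicator
          (fun w => ‖w‖ ^ (-α)) w from funext key,
      integral_const_mul, integral_indicator measurableSet_ball]
  have hg1 : ∫ w, g w = ∫ w in ball (0 : EuclideanSpace ℝ (Fin N)) 1, ‖w‖ ^ (-α) := by
    rw [hg, integral_indicator measurableSet_ball]
  rw [hval2, hg1, finrank_euclideanSpace_fin, smul_eq_mul] at hval
  have hρα : (0:ℝ) < ρ ^ α := by positivity
  have := congrArg (fun t => (ρ ^ α)⁻¹ * t) hval
  simp only [← mul_assoc, inv_mul_cancel₀ hρα.ne', one_mul] at this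
  rw [this, ← Real.rpow_natCast ρ N, ← Real.rpow_neg hρ.le,
    ← Real.rpow_add hρ, neg_add_eq_sub]

end S18b

namespace S18c
open S18 S18b

set_option maxHeartbeats 1000000 in
lemma Jbound {N : ℕ} (hN : 0 < N) {α η : ℝ} (hα0 : 0 < α) (hαN : α < N) (hη : 0 < η) :
    ∃ C : ℝ, 0 ≤ C ∧ ∀ ξ : EuclideanSpace ℝ (Fin N), 2 < ‖ξ‖ →
      (∫ w : EuclideanSpace ℝ (Fin N),
        ‖w‖ ^ (-α) * (1 + ‖ξ - w‖) ^ (-((3 * (N : ℝ) + 2) / 2 - α + η))) ≤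
      C * (1 + ‖ξ‖) ^ (-(min α (((N : ℝ) + 2) / 2))) := by
  have hN1 : (1:ℝ) ≤ N := by exact_mod_cast hN
  set β : ℝ := (3 * (N : ℝ) + 2) / 2 - α + η with hβ_def
  set μ' : ℝ := min α (((N : ℝ) + 2) / 2) with hμ'_def
  set a : ℝ := α - μ' with ha_def
  have hμ'pos : 0 < μ' := lt_min hα0 (by positivity)
  have hμ'α : μ' ≤ α := min_le_left _ _
  have hμ'N : μ' ≤ ((N : ℝ) + 2) / 2 := min_le_right _ _
  have ha : 0 ≤ a := sub_nonneg.mpr hμ'α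
  have hβpos : 0 < β := by rw [hβ_def]; nlinarith
  have haβ : (N : ℝ) < a + β := by rw [ha_def, hβ_def]; nlinarith
  have hexp : (N : ℝ) - α - β ≤ -μ' := by rw [hβ_def]; nlinarith
  set c₁ : ℝ := ∫ w in ball (0 : EuclideanSpace ℝ (Fin N)) 1, ‖w‖ ^ (-α) with hc₁_def
  have hc₁ : 0 ≤ c₁ := integral_nonneg fun w => by positivity
  set CP : ℝ := ∫ w : EuclideanSpace ℝ (Fin N), (1 + ‖w‖) ^ (-(a + β)) with hCP_def
  have hCP : 0 ≤ CP := integral_nonneg fun w => by positivity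
  have hJap : Integrable (fun w : EuclideanSpace ℝ (Fin N) => (1 + ‖w‖) ^ (-(a + β)))
      volume := by
    apply integrable_one_add_norm
    rwa [finrank_euclideanSpace_fin]
  have h2a : (0:ℝ) ≤ (2:ℝ) ^ a := Real.rpow_nonneg (by norm_num) _
  have h3μ : (0:ℝ) ≤ (3:ℝ) ^ μ' := Real.rpow_nonneg (by norm_num) _
  have hc2 : (0:ℝ) ≤ c₁ + 2 ^ a * (2 * CP) := by nlinarith
  refine ⟨3 ^ μ' * (c₁ + 2 ^ a * (2 * CP)), mul_nonneg h3μ hc2, fun ξ hξ => ?_⟩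
  set ρ : ℝ := ‖ξ‖ / 2 with hρ_def
  have hρ1 : 1 < ρ := by rw [hρ_def]; linarith
  have hρ0 : 0 < ρ := lt_trans one_pos hρ1
  obtain ⟨hIball, hIval⟩ := riesz_ball_scale hN hα0 hαN hρ0
  set f : EuclideanSpace ℝ (Fin N) → ℝ :=
    fun w => ‖w‖ ^ (-α) * (1 + ‖ξ - w‖) ^ (-β) with hf_def
  set h : EuclideanSpace ℝ (Fin N) → ℝ := fun w =>
    (ball (0 : EuclideanSpace ℝ (Fin N)) ρ).indicator (fun w => ρ ^ (-β) * ‖w‖ ^ (-α)) w +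
      2 ^ a * ρ ^ (-μ') * ((1 + ‖w‖) ^ (-(a + β)) + (1 + ‖ξ - w‖) ^ (-(a + β))) with hh_def
  have hfh : ∀ w, f w ≤ h w := by
    intro w
    simp only [hf_def, hh_def]
    by_cases hw : w ∈ ball (0 : EuclideanSpace ℝ (Fin N)) ρ
    · rw [indicator_of_mem hw]
      have hwlt : ‖w‖ < ρ := mem_ball_zero_iff.mp hw
      have h1 : ρ ≤ 1 + ‖ξ - w‖ := by
        have h2 : ‖ξ‖ - ‖w‖ ≤ ‖ξ - w‖ := norm_sub_norm_le _ _
        have h3 : ‖ξ‖ = 2 * ρ := by rw [hρ_def]; ring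
        linarith
      have h2 : (1 + ‖ξ - w‖) ^ (-β) ≤ ρ ^ (-β) :=
        Real.rpow_le_rpow_of_nonpos hρ0 h1 (neg_nonpos.mpr hβpos.le)
      calc ‖w‖ ^ (-α) * (1 + ‖ξ - w‖) ^ (-β) ≤ ‖w‖ ^ (-α) * ρ ^ (-β) :=
            mul_le_mul_of_nonneg_left h2 (by positivity)
        _ = ρ ^ (-β) * ‖w‖ ^ (-α) := by ring
        _ ≤ _ := le_add_of_nonneg_right (by positivity)
    · rw [indicator_of_notMem hw, zero_add]
      have hwρ : ρ ≤ ‖w‖ := not_lt.mp (fun hc => hw (mem_ball_zero_iff.mpr hc))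
      have hw1 : 1 ≤ ‖w‖ := hρ1.le.trans hwρ
      have hw0 : 0 < ‖w‖ := lt_of_lt_of_le one_pos hw1
      have hsplit : ‖w‖ ^ (-α) = ‖w‖ ^ (-μ') * ‖w‖ ^ (-a) := by
        rw [← Real.rpow_add hw0, ha_def]; ring_nf
      have hb1 : ‖w‖ ^ (-μ') ≤ ρ ^ (-μ') :=
        Real.rpow_le_rpow_of_nonpos hρ0 hwρ (neg_nonpos.mpr hμ'pos.le)
      have hb2 : ‖w‖ ^ (-a) ≤ 2 ^ a * (1 + ‖w‖) ^ (-a) := by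
        have h12 : 1 + ‖w‖ ≤ 2 * ‖w‖ := by linarith
        have h13 : (2 * ‖w‖) ^ (-a) ≤ (1 + ‖w‖) ^ (-a) :=
          Real.rpow_le_rpow_of_nonpos (by positivity) h12 (neg_nonpos.mpr ha)
        have h14 : ‖w‖ ^ (-a) = 2 ^ a * (2 * ‖w‖) ^ (-a) := by
          rw [Real.mul_rpow (by norm_num) (norm_nonneg w), ← mul_assoc,
            ← Real.rpow_add two_pos, add_neg_cancel, Real.rpow_zero, one_mul]
        rw [h14]
        exact mul_le_mul_of_nonneg_left h13 (by positivity)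
      have hb3 : (1 + ‖w‖) ^ (-a) * (1 + ‖ξ - w‖) ^ (-β) ≤
          (1 + ‖w‖) ^ (-(a + β)) + (1 + ‖ξ - w‖) ^ (-(a + β)) :=
        pointP (le_add_of_nonneg_right (norm_nonneg w))
          (le_add_of_nonneg_right (norm_nonneg _)) ha hβpos.le
      calc ‖w‖ ^ (-α) * (1 + ‖ξ - w‖) ^ (-β)
          = ‖w‖ ^ (-μ') * (‖w‖ ^ (-a) * (1 + ‖ξ - w‖) ^ (-β)) := by rw [hsplit]; ring
        _ ≤ ρ ^ (-μ') * ((2 ^ a * (1 + ‖w‖) ^ (-a)) * (1 + ‖ξ - w‖) ^ (-β)) := by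
            apply mul_le_mul hb1 (mul_le_mul_of_nonneg_right hb2 (by positivity))
              (by positivity) (by positivity)
        _ = 2 ^ a * ρ ^ (-μ') * ((1 + ‖w‖) ^ (-a) * (1 + ‖ξ - w‖) ^ (-β)) := by ring
        _ ≤ 2 ^ a * ρ ^ (-μ') * ((1 + ‖w‖) ^ (-(a + β)) + (1 + ‖ξ - w‖) ^ (-(a + β))) :=
            mul_le_mul_of_nonneg_left hb3 (by positivity)
  have hInd : Integrable
      ((ball (0 : EuclideanSpace ℝ (Fin N)) ρ).indicator
        (fun w => ρ ^ (-β) * ‖w‖ ^ (-α))) volume :=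
    IntegrableOn.integrable_indicator (hIball.const_mul _) measurableSet_ball
  have hJ2 : Integrable (fun w : EuclideanSpace ℝ (Fin N) => (1 + ‖ξ - w‖) ^ (-(a + β)))
      volume := hJap.comp_sub_left ξ
  have hJsum : Integrable (fun w : EuclideanSpace ℝ (Fin N) =>
      (1 + ‖w‖) ^ (-(a + β)) + (1 + ‖ξ - w‖) ^ (-(a + β))) volume := hJap.add hJ2
  have hhint : Integrable h volume := by
    rw [hh_def]
    exact hInd.add (hJsum.const_mul _)
  have hfm : AEStronglyMeasurable f volume := by
    rw [hf_def]
    apply Measurable.aestronglyMeasurable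
    fun_prop
  have hfint : Integrable f volume :=
    hhint.mono' hfm (ae_of_all _ fun w => by
      rw [Real.norm_eq_abs, abs_of_nonneg (by rw [hf_def]; positivity)]
      exact hfh w)
  have hmono : ∫ w, f w ≤ ∫ w, h w := integral_mono hfint hhint hfh
  have hhval : ∫ w, h w = ρ ^ (-β) * (ρ ^ ((N : ℝ) - α) * c₁) +
      2 ^ a * ρ ^ (-μ') * (CP + CP) := by
    rw [hh_def]
    rw [integral_add hInd (hJsum.const_mul _), integral_indicator measurableSet_ball,
      integral_const_mul, integral_const_mul, integral_add hJap hJ2, hIval]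
    rw [integral_sub_left_eq_self (fun w => (1 + ‖w‖) ^ (-(a + β))) volume ξ, hCP_def]
  have hstep1 : ∫ w, h w ≤ (c₁ + 2 ^ a * (2 * CP)) * ρ ^ (-μ') := by
    rw [hhval]
    have e1 : ρ ^ (-β) * ρ ^ ((N : ℝ) - α) = ρ ^ ((N : ℝ) - α - β) := by
      rw [← Real.rpow_add hρ0]; ring_nf
    have e2 : ρ ^ ((N : ℝ) - α - β) ≤ ρ ^ (-μ') :=
      Real.rpow_le_rpow_of_exponent_le hρ1.le hexp
    have e3 : (0:ℝ) ≤ ρ ^ (-μ') := Real.rpow_nonneg hρ0.le _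
    rw [← mul_assoc, e1]
    nlinarith [mul_le_mul_of_nonneg_right e2 hc₁]
  have hstep2 : ρ ^ (-μ') ≤ 3 ^ μ' * (1 + ‖ξ‖) ^ (-μ') := by
    have h3 : 1 + ‖ξ‖ ≤ 3 * ρ := by
      have : ‖ξ‖ = 2 * ρ := by rw [hρ_def]; ring
      linarith
    have h4 : (3 * ρ) ^ (-μ') ≤ (1 + ‖ξ‖) ^ (-μ') :=
      Real.rpow_le_rpow_of_nonpos (by positivity) h3 (neg_nonpos.mpr hμ'pos.le)
    have h5 : (3 * ρ) ^ (-μ') = 3 ^ (-μ') * ρ ^ (-μ') := by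
      rw [Real.mul_rpow (by norm_num) hρ0.le]
    have h6 : ρ ^ (-μ') = 3 ^ μ' * (3 * ρ) ^ (-μ') := by
      rw [h5, ← mul_assoc, ← Real.rpow_add (by norm_num : (0:ℝ) < 3), add_neg_cancel,
        Real.rpow_zero, one_mul]
    rw [h6]
    exact mul_le_mul_of_nonneg_left h4 (by positivity)
  have final : ∫ w, f w ≤ 3 ^ μ' * (c₁ + 2 ^ a * (2 * CP)) * (1 + ‖ξ‖) ^ (-μ') := by
    calc ∫ w, f w ≤ (c₁ + 2 ^ a * (2 * CP)) * ρ ^ (-μ') := le_trans hmono hstep1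
      _ ≤ (c₁ + 2 ^ a * (2 * CP)) * (3 ^ μ' * (1 + ‖ξ‖) ^ (-μ')) :=
          mul_le_mul_of_nonneg_left hstep2 hc2
      _ = 3 ^ μ' * (c₁ + 2 ^ a * (2 * CP)) * (1 + ‖ξ‖) ^ (-μ') := by ring
  exact final

end S18c

end AuxS18

/-- **Lemma B.3.** For `N > 5`, `0 < α < N`, `η > 0` there is `C > 0` such that
`(|·|^{−α} ∗ λ^{N−α/2}(1+λ|·−z_i|)^{−((3N+2)/2−α+η)})(x)
  ≤ C λ^{α/2} (1+λ|x−z_i|)^{−min{α,(N+2)/2}}`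
(for `λ > 0` and wherever `λ|x−z_i|/2 > 1`). -/

theorem statement18 (N : ℕ) (hN : 5 < N) (α η : ℝ) (hα0 : 0 < α) (hαN : α < (N : ℝ))
    (hη : 0 < η) :
    ∃ C : ℝ, 0 < C ∧ ∀ lam : ℝ, 0 < lam → ∀ z x : Euc N, 1 < lam * ‖x - z‖ / 2 →
      (∫ y : Euc N, ‖y‖ ^ (-α) *
          (lam ^ ((N : ℝ) - α / 2) *
            (1 + lam * ‖x - z - y‖) ^ (-((3 * (N : ℝ) + 2) / 2 - α + η)))) ≤
        C * lam ^ (α / 2) * (1 + lam * ‖x - z‖) ^ (-(min α (((N : ℝ) + 2) / 2))) := by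
  have hN0 : 0 < N := by omega
  obtain ⟨C₀, hC₀, hJ⟩ := S18c.Jbound hN0 hα0 hαN hη
  refine ⟨C₀ + 1, by linarith, fun lam hlam z x hxz => ?_⟩
  set β : ℝ := (3 * (N : ℝ) + 2) / 2 - α + η with hβ_def
  set ξ : Euc N := lam • (x - z) with hξ_def
  have hξnorm : ‖ξ‖ = lam * ‖x - z‖ := by
    rw [hξ_def, norm_smul, Real.norm_eq_abs, abs_of_pos hlam]
  have hξ2 : 2 < ‖ξ‖ := by rw [hξnorm]; linarith
  set f : Euc N → ℝ := fun w => ‖w‖ ^ (-α) * (1 + ‖ξ - w‖) ^ (-β) with hf_def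
  have hcomp : ∀ y : Euc N,
      ‖y‖ ^ (-α) * (lam ^ ((N : ℝ) - α / 2) * (1 + lam * ‖x - z - y‖) ^ (-β)) =
        lam ^ ((N : ℝ) - α / 2) * lam ^ α * f (lam • y) := by
    intro y
    have h1 : ‖lam • y‖ = lam * ‖y‖ := by
      rw [norm_smul, Real.norm_eq_abs, abs_of_pos hlam]
    have h2 : ‖ξ - lam • y‖ = lam * ‖x - z - y‖ := by
      rw [hξ_def, ← smul_sub, norm_smul, Real.norm_eq_abs, abs_of_pos hlam]
    have : lam ^ ((N : ℝ) - α / 2) * lam ^ α * f (lam • y) =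
        ‖y‖ ^ (-α) * (lam ^ ((N : ℝ) - α / 2) * (1 + lam * ‖x - z - y‖) ^ (-β)) := by
      calc lam ^ ((N : ℝ) - α / 2) * lam ^ α * f (lam • y)
          = lam ^ ((N : ℝ) - α / 2) * lam ^ α *
            ((lam * ‖y‖) ^ (-α) * (1 + lam * ‖x - z - y‖) ^ (-β)) := by
            simp only [hf_def]
            rw [h1, h2]
        _ = lam ^ ((N : ℝ) - α / 2) * (lam ^ α * lam ^ (-α)) *
            (‖y‖ ^ (-α) * (1 + lam * ‖x - z - y‖) ^ (-β)) := by
            rw [Real.mul_rpow hlam.le (norm_nonneg y)]; ring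
        _ = ‖y‖ ^ (-α) * (lam ^ ((N : ℝ) - α / 2) * (1 + lam * ‖x - z - y‖) ^ (-β)) := by
            rw [← Real.rpow_add hlam, add_neg_cancel, Real.rpow_zero]; ring
    exact this.symm
  have hscale : ∫ y : Euc N, f (lam • y) = |((lam : ℝ) ^ N)⁻¹| • ∫ w : Euc N, f w := by
    have := MeasureTheory.Measure.integral_comp_smul volume f lam
    rwa [finrank_euclideanSpace_fin] at this
  have habs : |((lam : ℝ) ^ N)⁻¹| = lam ^ (-(N : ℝ)) := by
    rw [abs_of_pos (by positivity), ← Real.rpow_natCast lam N, ← Real.rpow_neg hlam.le]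
  have hLHS : (∫ y : Euc N, ‖y‖ ^ (-α) *
      (lam ^ ((N : ℝ) - α / 2) * (1 + lam * ‖x - z - y‖) ^ (-β))) =
      lam ^ (α / 2) * ∫ w : Euc N, f w := by
    calc (∫ y : Euc N, ‖y‖ ^ (-α) *
        (lam ^ ((N : ℝ) - α / 2) * (1 + lam * ‖x - z - y‖) ^ (-β)))
        = ∫ y : Euc N, lam ^ ((N : ℝ) - α / 2) * lam ^ α * f (lam • y) := by
          exact integral_congr_ae (Filter.Eventually.of_forall hcomp)
      _ = lam ^ ((N : ℝ) - α / 2) * lam ^ α * ∫ y : Euc N, f (lam • y) := by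
          rw [MeasureTheory.integral_const_mul]
      _ = lam ^ ((N : ℝ) - α / 2) * lam ^ α * (lam ^ (-(N : ℝ)) * ∫ w : Euc N, f w) := by
          rw [hscale, habs, smul_eq_mul]
      _ = lam ^ ((N : ℝ) - α / 2) * lam ^ α * lam ^ (-(N : ℝ)) * ∫ w : Euc N, f w := by
          ring
      _ = lam ^ (α / 2) * ∫ w : Euc N, f w := by
          rw [← Real.rpow_add hlam, ← Real.rpow_add hlam]
          congr 1
          ring_nf
  rw [hLHS]
  have hJξ := hJ ξ hξ2
  have hlamp : (0:ℝ) ≤ lam ^ (α / 2) := Real.rpow_nonneg hlam.le _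
  have hfinal : lam ^ (α / 2) * ∫ w : Euc N, f w ≤
      lam ^ (α / 2) * (C₀ * (1 + ‖ξ‖) ^ (-(min α (((N : ℝ) + 2) / 2)))) :=
    mul_le_mul_of_nonneg_left hJξ hlamp
  have hpow : (0:ℝ) ≤ (1 + ‖ξ‖) ^ (-(min α (((N : ℝ) + 2) / 2))) :=
    Real.rpow_nonneg (by positivity) _
  calc lam ^ (α / 2) * ∫ w : Euc N, f w
      ≤ lam ^ (α / 2) * (C₀ * (1 + ‖ξ‖) ^ (-(min α (((N : ℝ) + 2) / 2)))) := hfinal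
    _ = C₀ * lam ^ (α / 2) * (1 + lam * ‖x - z‖) ^ (-(min α (((N : ℝ) + 2) / 2))) := by
        rw [← hξnorm]; ring
    _ ≤ (C₀ + 1) * lam ^ (α / 2) * (1 + lam * ‖x - z‖) ^ (-(min α (((N : ℝ) + 2) / 2))) := by
        rw [← hξnorm]
        nlinarith [mul_nonneg hlamp hpow]
end
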